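/- Let k and n be integers with 2 ≤ k ≤ n and let r be a real number. Then Σ_{(X,B) : 1 ∈ B} r^{|B|} = Σ_{b=0}^{k−2} C(k−1, b) · C(n−b−2, k−b−2) · r^{b+1}, where the left-hand sum ranges over all states (X, B) in which worker 1 is blocked, i.e., over all pairs where X = (x_1, …, x_k) is a k-tuple of positive integers with x_1 + ⋯ + x_k = n, B is a proper subset of {1, …, k} with x_i = 1 for every i ∈ B, and 1 ∈ B, and C(·,·) denotes the binomial coefficient. -/

import Mathlib

/-!
Group the states by their blocked set `B`. For fixed `B` the tuples `X` are the compositions of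
`n` into `k` positive parts with `X i = 1` on `B`; subtracting `1` from every part identifies them
with the weak compositions of `n - k` supported on the complement of `B`, and stars and bars counts
these as `C(n - |B| - 1, k - |B| - 1)`. The admissible `B ∋ 1` are `{1}` together with a proper
subset of the remaining `k - 1` workers, and `C(k - 1, b)` of them have size `b + 1`.
-/

/-- The set of states of the circular-warehouse model: pairs `(X, B)` where `X`
is a k-tuple of positive integers summing to `n` and `B` is a proper subset of
the workers with `X i = 1` for every blocked worker `i ∈ B`. -/
def States (k n : ℕ) : Set ((Fin k → ℕ) × Finset (Fin k)) :=
  {p | (∀ i, 0 < p.1 i) ∧ (∑ i, p.1 i = n) ∧ p.2 ≠ Finset.univ ∧ ∀ i ∈ p.2, p.1 i = 1}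

open Finset

namespace Finset

lemma card_piAntidiag_nat {ι : Type*} [DecidableEq ι] (s : Finset ι) (n : ℕ) :
    #(piAntidiag s n) = (#s + n - 1).choose n := by
  rw [← card_finsuppAntidiag_nat_eq_choose, finsuppAntidiag, card_map, card_attach]

lemma sum_powerset_erase_self_apply_card {α β : Type*} [DecidableEq β] [AddCommMonoid α]
    (f : ℕ → α) (x : Finset β) :
    ∑ t ∈ x.powerset.erase x, f #t = ∑ m ∈ range #x, (#x).choose m • f m := by
  have herase : x.powerset.erase x = {t ∈ x.powerset | #t < #x} := by
    ext t
    simp only [mem_erase, mem_powerset, mem_filter]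
    exact ⟨fun ⟨hne, hsub⟩ => ⟨hsub, card_lt_card (ssubset_of_subset_of_ne hsub hne)⟩,
      fun ⟨hsub, hlt⟩ => ⟨fun h => hlt.ne (h ▸ rfl), hsub⟩⟩
  calc ∑ t ∈ x.powerset.erase x, f #t
      = ∑ t ∈ x.powerset, if #t < #x then f #t else 0 := by rw [herase, sum_filter]
    _ = ∑ m ∈ range (#x + 1), (#x).choose m • if m < #x then f m else 0 :=
      sum_powerset_apply_card (fun m => if m < #x then f m else 0)
    _ = ∑ m ∈ range #x, (#x).choose m • f m := by
      rw [sum_range_succ, if_neg (lt_irrefl _), smul_zero, add_zero]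
      exact sum_congr rfl fun m hm => by rw [if_pos (mem_range.1 hm)]

lemma sum_filter_mem_ne_univ_apply_card {α β : Type*} [Fintype α] [DecidableEq α]
    [AddCommMonoid β] (a : α) (f : ℕ → β) :
    ∑ B with a ∈ B ∧ B ≠ univ, f #B
      = ∑ m ∈ range (Fintype.card α - 1), (Fintype.card α - 1).choose m • f (m + 1) := by
  rw [← card_univ, ← card_erase_of_mem (mem_univ a),
    ← sum_powerset_erase_self_apply_card (fun m => f (m + 1))]
  have ha_notMem {t : Finset α} (ht : t ∈ (univ.erase a).powerset.erase (univ.erase a)) :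
      a ∉ t := fun h => (mem_erase.1 (mem_powerset.1 (mem_erase.1 ht).2 h)).1 rfl
  refine sum_nbij' (·.erase a) (insert a) (fun B hB => ?_) (fun t ht => ?_)
    (fun B hB => insert_erase (mem_filter.1 hB).2.1) (fun t ht => erase_insert (ha_notMem ht))
    (fun B hB => by rw [card_erase_add_one (mem_filter.1 hB).2.1])
  · obtain ⟨-, haB, hne⟩ := mem_filter.1 hB
    refine mem_erase.2 ⟨fun h => hne ?_, mem_powerset.2 (erase_subset_erase a (subset_univ B))⟩
    rw [← insert_erase haB, h, insert_erase (mem_univ a)]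
  · refine mem_filter.2 ⟨mem_univ _, mem_insert_self a t, fun h => (mem_erase.1 ht).1 ?_⟩
    rw [← h, erase_insert (ha_notMem ht)]

end Finset

section BlockedCompositions

variable {ι : Type*} [Fintype ι] [DecidableEq ι]

def blockedCompositions (B : Finset ι) (n : ℕ) : Finset (ι → ℕ) :=
  {x ∈ piAntidiag univ n | (∀ i, 0 < x i) ∧ ∀ i ∈ B, x i = 1}

lemma card_blockedCompositions {B : Finset ι} {n : ℕ} (hB : #B < Fintype.card ι)
    (hn : Fintype.card ι ≤ n) :
    #(blockedCompositions B n) = (n - #B - 1).choose (Fintype.card ι - #B - 1) := by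
  have hbij : #(blockedCompositions B n) = #(piAntidiag Bᶜ (n - Fintype.card ι)) := by
    refine card_nbij' (· - 1) (· + 1) ?_ ?_ ?_ ?_
    · intro x hx
      simp only [blockedCompositions, coe_filter, Set.mem_ofPred_eq, mem_piAntidiag] at hx
      obtain ⟨⟨hsum, -⟩, hpos, hone⟩ := hx
      have hzero : ∀ i ∉ Bᶜ, x i - 1 = 0 := fun i hi => by
        rw [hone i (by simpa using hi)]
      rw [mem_coe, mem_piAntidiag]
      refine ⟨?_, fun i hi => not_imp_comm.1 (hzero i) hi⟩
      calc ∑ i ∈ Bᶜ, (x i - 1) = ∑ i, (x i - 1) :=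
            sum_subset (subset_univ _) fun i _ hi => hzero i hi
        _ = n - Fintype.card ι := by
          rw [sum_tsub_distrib _ fun i _ => hpos i, hsum, sum_const, card_univ, smul_eq_mul,
            mul_one]
    · intro y hy
      rw [mem_coe, mem_piAntidiag] at hy
      obtain ⟨hsum, hsupp⟩ := hy
      have hzero : ∀ i ∉ Bᶜ, y i = 0 := fun i hi => not_imp_comm.1 (hsupp i) hi
      simp only [blockedCompositions, coe_filter, Set.mem_ofPred_eq, mem_piAntidiag,
        mem_univ, implies_true, and_true, Pi.add_apply, Pi.one_apply]
      refine ⟨?_, fun i => Nat.succ_pos _, fun i hi => by simp [hzero i (by simpa using hi)]⟩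
      calc ∑ i, (y i + 1) = Bᶜ.sum y + Fintype.card ι := by
            rw [sum_add_distrib, sum_const, card_univ, smul_eq_mul, mul_one,
              sum_subset (subset_univ _) fun i _ hi => hzero i hi]
        _ = n := by omega
    · intro x hx
      simp only [blockedCompositions, coe_filter, Set.mem_ofPred_eq] at hx
      funext i
      exact Nat.sub_add_cancel (hx.2.1 i)
    · intro y _
      simp
  rw [hbij, card_piAntidiag_nat, card_compl,
    show Fintype.card ι - #B + (n - Fintype.card ι) - 1 = n - #B - 1 by omega]
  exact Nat.choose_symm_of_eq_add (by omega)

end BlockedCompositions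

lemma finsum_states_blocked_eq_sum_card_smul {M : Type*} [AddCommMonoid M] {k : ℕ} (n : ℕ) (a : Fin k)
    (w : Finset (Fin k) → M) :
    ∑ᶠ p ∈ {p ∈ States k n | a ∈ p.2}, w p.2
      = ∑ B with a ∈ B ∧ B ≠ univ, #(blockedCompositions B n) • w B := by
  set F : Finset (Finset (Fin k)) := {B | a ∈ B ∧ B ≠ univ}
  set T := {p ∈ piAntidiag (univ : Finset (Fin k)) n ×ˢ F | p.1 ∈ blockedCompositions p.2 n}
  have hmem (p : (Fin k → ℕ) × Finset (Fin k)) :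
      p ∈ T ↔ p.2 ∈ F ∧ p.1 ∈ blockedCompositions p.2 n := by
    simp only [T, mem_filter, mem_product, blockedCompositions]
    tauto
  have hset : {p ∈ States k n | a ∈ p.2} = ↑T := by
    ext p
    simp only [hmem, States, F, blockedCompositions, Set.mem_ofPred_eq, mem_filter,
      mem_univ, true_and, mem_piAntidiag, implies_true, and_true, mem_coe]
    tauto
  rw [hset, finsum_mem_coe_finset,
    sum_finset_product_right' T F (blockedCompositions · n) hmem (f := fun _ B => w B)]
  simp only [sum_const]

/-- the total weight of all states in which worker 1 is blocked,
each state `(X,B)` weighted by `r^{|B|}`, equals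
`Σ_{b=0}^{k-2} C(k-1,b) * C(n-b-2, k-b-2) * r^{b+1}`. -/
theorem warehouse_blocked_worker_weight (k n : ℕ) (hk : 2 ≤ k) (hkn : k ≤ n) (r : ℝ) :
    ∑ᶠ p ∈ {p ∈ States k n | (⟨0, by omega⟩ : Fin k) ∈ p.2}, r ^ p.2.card
      = ∑ b ∈ Finset.range (k - 1),
          (Nat.choose (k - 1) b : ℝ) * (Nat.choose (n - b - 2) (k - b - 2) : ℝ)
            * r ^ (b + 1) := by
  set a : Fin k := ⟨0, by omega⟩
  calc ∑ᶠ p ∈ {p ∈ States k n | a ∈ p.2}, r ^ #p.2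
      = ∑ B with a ∈ B ∧ B ≠ univ, #(blockedCompositions B n) • r ^ #B :=
        finsum_states_blocked_eq_sum_card_smul n a (r ^ #·)
    _ = ∑ B with a ∈ B ∧ B ≠ univ, (n - #B - 1).choose (k - #B - 1) • r ^ #B := by
        refine sum_congr rfl fun B hB => ?_
        have hcard : #B < Fintype.card (Fin k) :=
          card_lt_iff_ne_univ B |>.2 (mem_filter.1 hB).2.2
        rw [card_blockedCompositions hcard (by simpa using hkn), Fintype.card_fin]
    _ = _ := by
        rw [sum_filter_mem_ne_univ_apply_card a fun m => (n - m - 1).choose (k - m - 1) • r ^ m,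
          Fintype.card_fin]
        refine sum_congr rfl fun b _ => ?_
        simp only [nsmul_eq_mul, Nat.sub_sub]
        ring
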